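/- arXiv:2603.09834 — 6 statements merged into one kernel-verified Lean document; each statement's English description precedes it below -/
import Mathlib

section
/- Let d ≥ 2 be an integer, z₀ > 0, a_z ∈ [1, 2), and x₀ ∈ ℝ^{d−1}. Define φ(x, z) = ((x − x₀)·√(d−1)/(a_z·z₀), log₂(z/z₀)) ∈ ℝ^{d−1} × ℝ. Then for all points a = (x, z) and b = (x', z') with x, x' ∈ ℝ^{d−1} and z₀ ≤ z ≤ 2·z₀, z₀ ≤ z' ≤ 2·z₀, the Euclidean distances satisfy dist_R(a,b)/(2·√2·z₀) ≤ dist_R(φ(a), φ(b)) ≤ (2·√(d−1)/ln 2)·dist_R(a,b)/z₀. -/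
set_option maxHeartbeats 1000000 in
/-- The map `φ(x,z) = ((x − x₀)·√(d−1)/(a_z·z₀), log₂(z/z₀))` distorts Euclidean distances
within the slab `z₀ ≤ z ≤ 2 z₀` by the stated factors. -/
theorem stmt_4 (d : ℕ) (hd : 2 ≤ d) (z₀ az : ℝ) (hz₀ : 0 < z₀)
    (haz1 : 1 ≤ az) (haz2 : az < 2) (x₀ : EuclideanSpace ℝ (Fin (d - 1)))
    (φ : EuclideanSpace ℝ (Fin (d - 1)) × ℝ → EuclideanSpace ℝ (Fin (d - 1)) × ℝ)
    (hφ : ∀ x z, φ (x, z) =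
      ((Real.sqrt (d - 1) / (az * z₀)) • (x - x₀), Real.logb 2 (z / z₀)))
    (distR : (EuclideanSpace ℝ (Fin (d - 1)) × ℝ) → (EuclideanSpace ℝ (Fin (d - 1)) × ℝ) → ℝ)
    (hdistR : ∀ a b, distR a b = Real.sqrt (‖a.1 - b.1‖ ^ 2 + (a.2 - b.2) ^ 2))
    (x x' : EuclideanSpace ℝ (Fin (d - 1))) (z z' : ℝ)
    (hz1 : z₀ ≤ z) (hz2 : z ≤ 2 * z₀) (hz'1 : z₀ ≤ z') (hz'2 : z' ≤ 2 * z₀) :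
    distR (x, z) (x', z') / (2 * Real.sqrt 2 * z₀) ≤ distR (φ (x, z)) (φ (x', z')) ∧
      distR (φ (x, z)) (φ (x', z')) ≤
        (2 * Real.sqrt (d - 1) / Real.log 2) * distR (x, z) (x', z') / z₀ := by
  have hd1 : (1:ℝ) ≤ (d:ℝ) - 1 := by
    have : (2:ℝ) ≤ (d:ℝ) := by exact_mod_cast hd
    linarith
  have haz0 : (0:ℝ) < az := by linarith
  have hl2 : 0 < Real.log 2 := Real.log_pos (by norm_num)
  have hl2' : Real.log 2 < 1 := by
    have := Real.log_two_lt_d9; linarith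
  have hz0 : (0:ℝ) < z := lt_of_lt_of_le hz₀ hz1
  have hz'0 : (0:ℝ) < z' := lt_of_lt_of_le hz₀ hz'1
  set c := Real.sqrt ((d:ℝ) - 1) / (az * z₀) with hc
  have hc0 : 0 ≤ c := div_nonneg (Real.sqrt_nonneg _) (by positivity)
  have hcsq : c ^ 2 * (az ^ 2 * z₀ ^ 2) = (d:ℝ) - 1 := by
    rw [hc, div_pow, Real.sq_sqrt (by linarith), mul_pow]
    field_simp
  have hN0 : 0 ≤ ‖x - x'‖ := norm_nonneg _
  -- bounds relating log z - log z' and z - z'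
  have main : ∀ u v : ℝ, z₀ ≤ u → u ≤ 2*z₀ → z₀ ≤ v → v ≤ u →
      (u - v)/(2*z₀) ≤ Real.log u - Real.log v ∧ Real.log u - Real.log v ≤ (u-v)/z₀ := by
    intro u v hu1 hu2 hv1 hvu
    have hu0 : (0:ℝ) < u := lt_of_lt_of_le hz₀ hu1
    have hv0 : (0:ℝ) < v := lt_of_lt_of_le hz₀ hv1
    have h1 : Real.log (u/v) ≤ u/v - 1 := Real.log_le_sub_one_of_pos (by positivity)
    have h2 : Real.log (v/u) ≤ v/u - 1 := Real.log_le_sub_one_of_pos (by positivity)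
    rw [Real.log_div hu0.ne' hv0.ne'] at h1
    rw [Real.log_div hv0.ne' hu0.ne'] at h2
    constructor
    · have h3 : (u - v)/(2*z₀) ≤ 1 - v/u := by
        rw [show (1:ℝ) - v/u = (u - v)/u by field_simp, div_le_div_iff₀ (by positivity) hu0]
        nlinarith
      linarith
    · have h4 : u/v - 1 ≤ (u - v)/z₀ := by
        rw [show u/v - 1 = (u - v)/v by field_simp, div_le_div_iff₀ hv0 hz₀]
        nlinarith
      linarith
  have k1 : (z - z') ^ 2 ≤ 4 * z₀ ^ 2 * (Real.log z - Real.log z') ^ 2 := by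
    rcases le_total z' z with h | h
    · obtain ⟨ha, -⟩ := main z z' hz1 hz2 hz'1 h
      have hq : z - z' ≤ (Real.log z - Real.log z') * (2*z₀) := by
        rwa [div_le_iff₀ (by positivity)] at ha
      nlinarith [mul_self_le_mul_self (show (0:ℝ) ≤ z - z' by linarith) hq]
    · obtain ⟨ha, -⟩ := main z' z hz'1 hz'2 hz1 h
      have hq : z' - z ≤ (Real.log z' - Real.log z) * (2*z₀) := by
        rwa [div_le_iff₀ (by positivity)] at ha
      nlinarith [mul_self_le_mul_self (show (0:ℝ) ≤ z' - z by linarith) hq]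
  have k2 : (Real.log z - Real.log z') ^ 2 * z₀ ^ 2 ≤ (z - z') ^ 2 := by
    rcases le_total z' z with h | h
    · obtain ⟨ha, hb⟩ := main z z' hz1 hz2 hz'1 h
      have hS0 : 0 ≤ Real.log z - Real.log z' := by
        have : 0 ≤ (z - z')/(2*z₀) := div_nonneg (by linarith) (by positivity)
        linarith
      have hq : (Real.log z - Real.log z') * z₀ ≤ z - z' := by
        rw [div_eq_mul_inv] at hb
        calc (Real.log z - Real.log z') * z₀ ≤ ((z - z') * z₀⁻¹) * z₀ :=
              mul_le_mul_of_nonneg_right hb hz₀.le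
          _ = z - z' := by field_simp
      nlinarith [mul_self_le_mul_self (mul_nonneg hS0 hz₀.le) hq]
    · obtain ⟨ha, hb⟩ := main z' z hz'1 hz'2 hz1 h
      have hS0 : 0 ≤ Real.log z' - Real.log z := by
        have : 0 ≤ (z' - z)/(2*z₀) := div_nonneg (by linarith) (by positivity)
        linarith
      have hq : (Real.log z' - Real.log z) * z₀ ≤ z' - z := by
        rw [div_eq_mul_inv] at hb
        calc (Real.log z' - Real.log z) * z₀ ≤ ((z' - z) * z₀⁻¹) * z₀ :=
              mul_le_mul_of_nonneg_right hb hz₀.le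
          _ = z' - z := by field_simp
      nlinarith [mul_self_le_mul_self (mul_nonneg hS0 hz₀.le) hq]
  simp only [hdistR, hφ]
  have hnorm : ‖c • (x - x₀) - c • (x' - x₀)‖ = c * ‖x - x'‖ := by
    rw [← smul_sub, sub_sub_sub_cancel_right, norm_smul, Real.norm_eq_abs, abs_of_nonneg hc0]
  have hlogb : Real.logb 2 (z/z₀) - Real.logb 2 (z'/z₀)
      = (Real.log z - Real.log z') / Real.log 2 := by
    rw [Real.logb, Real.logb, Real.log_div hz0.ne' hz₀.ne', Real.log_div hz'0.ne' hz₀.ne']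
    ring
  rw [hnorm, hlogb]
  have hT : ((Real.log z - Real.log z') / Real.log 2) ^ 2 * (Real.log 2) ^ 2
      = (Real.log z - Real.log z') ^ 2 := by field_simp
  constructor
  · rw [div_le_iff₀ (by positivity)]
    calc Real.sqrt (‖x - x'‖ ^ 2 + (z - z') ^ 2)
        ≤ Real.sqrt ((8 * z₀ ^ 2) *
            ((c * ‖x - x'‖) ^ 2 + ((Real.log z - Real.log z') / Real.log 2) ^ 2)) := by
          apply Real.sqrt_le_sqrt
          have e1 : (1:ℝ) ≤ 8 * z₀ ^ 2 * c ^ 2 := by nlinarith [sq_nonneg c, sq_nonneg (c*z₀)]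
          have e0 : (Real.log z - Real.log z') ^ 2 ≤
              ((Real.log z - Real.log z') / Real.log 2) ^ 2 := by
            rw [div_pow, le_div_iff₀ (by positivity)]
            have hL2 : (Real.log 2) ^ 2 ≤ 1 := by nlinarith
            exact mul_le_of_le_one_right (sq_nonneg _) hL2
          have e2 : 2 * (z - z') ^ 2 ≤
              8 * z₀ ^ 2 * ((Real.log z - Real.log z') / Real.log 2) ^ 2 := by
            nlinarith [sq_nonneg z₀, e0, k1]
          nlinarith [sq_nonneg ‖x - x'‖]
      _ = Real.sqrt (8 * z₀ ^ 2) *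
            Real.sqrt ((c * ‖x - x'‖) ^ 2 + ((Real.log z - Real.log z') / Real.log 2) ^ 2) :=
          Real.sqrt_mul (by positivity) _
      _ = Real.sqrt ((c * ‖x - x'‖) ^ 2 + ((Real.log z - Real.log z') / Real.log 2) ^ 2) *
            (2 * Real.sqrt 2 * z₀) := by
          rw [show (8:ℝ) * z₀ ^ 2 = (2 * Real.sqrt 2 * z₀) ^ 2 by
            nlinarith [Real.sq_sqrt (show (0:ℝ) ≤ 2 by norm_num)],
            Real.sqrt_sq (by positivity)]
          ring
  · calc Real.sqrt ((c * ‖x - x'‖) ^ 2 + ((Real.log z - Real.log z') / Real.log 2) ^ 2)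
        ≤ Real.sqrt (4 * ((d:ℝ) - 1) * (‖x - x'‖ ^ 2 + (z - z') ^ 2)
              / ((Real.log 2) ^ 2 * z₀ ^ 2)) := by
          apply Real.sqrt_le_sqrt
          rw [le_div_iff₀ (by positivity)]
          have hL2 : (Real.log 2) ^ 2 ≤ 1 := by nlinarith
          have haz2' : (1:ℝ) ≤ az ^ 2 := by nlinarith
          have e1 : c ^ 2 * z₀ ^ 2 ≤ (d:ℝ) - 1 := by
            nlinarith [mul_nonneg (sq_nonneg (c * z₀)) (show (0:ℝ) ≤ az ^ 2 - 1 by linarith)]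
          have p1 : (c ^ 2 * z₀ ^ 2) * (‖x - x'‖ ^ 2 * (Real.log 2) ^ 2)
              ≤ ((d:ℝ) - 1) * ‖x - x'‖ ^ 2 :=
            mul_le_mul e1 (mul_le_of_le_one_right (sq_nonneg _) hL2) (by positivity)
              (by linarith)
          have p2 : ((Real.log z - Real.log z') / Real.log 2) ^ 2 * (Real.log 2) ^ 2 * z₀ ^ 2
              ≤ (z - z') ^ 2 := by
            rw [hT]; exact k2
          nlinarith [p1, p2, hd1, sq_nonneg (z - z'), sq_nonneg ‖x - x'‖,
            mul_nonneg (show (0:ℝ) ≤ (d:ℝ) - 1 by linarith) (sq_nonneg (z - z')),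
            mul_nonneg (show (0:ℝ) ≤ (d:ℝ) - 1 by linarith) (sq_nonneg ‖x - x'‖)]
      _ = 2 * Real.sqrt ((d:ℝ) - 1) / Real.log 2 *
            Real.sqrt (‖x - x'‖ ^ 2 + (z - z') ^ 2) / z₀ := by
          rw [show 4 * ((d:ℝ) - 1) * (‖x - x'‖ ^ 2 + (z - z') ^ 2) / ((Real.log 2) ^ 2 * z₀ ^ 2)
              = (4 * ((d:ℝ) - 1) / ((Real.log 2) ^ 2 * z₀ ^ 2)) * (‖x - x'‖ ^ 2 + (z - z') ^ 2)
              by ring,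
            Real.sqrt_mul (by positivity),
            show 4 * ((d:ℝ) - 1) / ((Real.log 2) ^ 2 * z₀ ^ 2)
                = (2 * Real.sqrt ((d:ℝ)-1) / (Real.log 2 * z₀)) ^ 2 by
              rw [div_pow, mul_pow, mul_pow, Real.sq_sqrt (by linarith)]; ring,
            Real.sqrt_sq (by positivity)]
          ring
end

section
/- There exist absolute constants c₁, c₂ > 0 (independent of d) such that the following holds. Let d ≥ 2 be an integer, z₀ > 0, a_z ∈ [1, 2), x₀ ∈ ℝ^{d−1}, and let C = {(x, z) : x₀ᵢ ≤ xᵢ ≤ x₀ᵢ + a_z·z₀/√(d−1) for each i, and z₀ ≤ z ≤ 2·z₀}. Define φ(x, z) = ((x − x₀)·√(d−1)/(a_z·z₀), log₂(z/z₀)). Then φ maps C bijectively onto the unit cube [0,1]^d, and for all p, q ∈ C one has c₁·ρ(p,q) ≤ dist_R(φ(p), φ(q)) ≤ c₂·√d·ρ(p,q), where dist_R is the Euclidean distance on ℝ^{d−1} × ℝ. -/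
set_option maxHeartbeats 1000000

lemma helper_arsinh_le {t : ℝ} (ht : 0 ≤ t) : Real.arsinh t ≤ t := by
  calc Real.arsinh t ≤ Real.arsinh (Real.sinh t) :=
        Real.arsinh_le_arsinh.mpr (Real.self_le_sinh_iff.mpr ht)
    _ = t := Real.arsinh_sinh t

lemma helper_le_arsinh {t : ℝ} (h0 : 0 ≤ t) (h2 : t ≤ 2) : t / 3 ≤ Real.arsinh t := by
  have h1 : (0:ℝ) < 1 + t := by linarith
  have hlog1 : t / (1 + t) ≤ Real.log (1 + t) := by
    have h := Real.one_sub_inv_le_log_of_pos h1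
    have he : 1 - (1 + t)⁻¹ = t / (1 + t) := by field_simp; ring
    linarith [he ▸ h]
  have hlog2 : Real.log (1 + t) ≤ Real.arsinh t := by
    rw [Real.arsinh]
    apply Real.log_le_log h1
    have : (1:ℝ) ≤ Real.sqrt (1 + t ^ 2) := by
      exact Real.le_sqrt_of_sq_le (by nlinarith)
    linarith
  have h3 : t / 3 ≤ t / (1 + t) := by
    apply div_le_div_of_nonneg_left h0 h1 (by linarith)
  linarith

lemma helper_log {z₀ z z' : ℝ} (hz₀ : 0 < z₀) (zb : z₀ ≤ z') (zt : z ≤ 2 * z₀)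
    (hle : z' ≤ z) :
    (z - z') / (2 * z₀) ≤ Real.log z - Real.log z' ∧
      Real.log z - Real.log z' ≤ (z - z') / z₀ := by
  have hz' : 0 < z' := lt_of_lt_of_le hz₀ zb
  have hz : 0 < z := lt_of_lt_of_le hz' hle
  rw [← Real.log_div hz.ne' hz'.ne']
  constructor
  · have h := Real.one_sub_inv_le_log_of_pos (div_pos hz hz')
    have he : 1 - (z / z')⁻¹ = (z - z') / z := by field_simp
    have h2 : (z - z') / (2 * z₀) ≤ (z - z') / z :=
      div_le_div_of_nonneg_left (by linarith) hz zt
    linarith [he ▸ h]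
  · have h := Real.log_le_sub_one_of_pos (div_pos hz hz')
    have he : z / z' - 1 = (z - z') / z' := by field_simp
    have h2 : (z - z') / z' ≤ (z - z') / z₀ :=
      div_le_div_of_nonneg_left (by linarith) hz₀ zb
    linarith [he ▸ h]

lemma helper_norm {n : ℕ} (x y : EuclideanSpace ℝ (Fin n)) {b : ℝ}
    (h : ∀ i, |x i - y i| ≤ b) : ‖x - y‖ ^ 2 ≤ n * b ^ 2 := by
  rw [EuclideanSpace.norm_eq, Real.sq_sqrt (by positivity)]
  calc ∑ i, ‖(x - y) i‖ ^ 2 ≤ ∑ _i : Fin n, b ^ 2 := by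
        refine Finset.sum_le_sum fun i _ => ?_
        have hi := h i
        simp only [PiLp.sub_apply, Real.norm_eq_abs]
        nlinarith [abs_nonneg (x i - y i)]
    _ = n * b ^ 2 := by
        rw [Finset.sum_const, Finset.card_univ, Fintype.card_fin, nsmul_eq_mul]

/-- There are absolute constants `c₁, c₂ > 0` such that for every `d ≥ 2` the map
`φ(x,z) = ((x − x₀)·√(d−1)/(a_z·z₀), log₂(z/z₀))` maps the horobox `C` bijectively onto the
unit cube, with `c₁·ρ(p,q) ≤ dist_R(φ(p),φ(q)) ≤ c₂·√d·ρ(p,q)` for hyperbolic distance `ρ`. -/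
theorem stmt_5 :
    ∃ c₁ c₂ : ℝ, 0 < c₁ ∧ 0 < c₂ ∧
      ∀ (d : ℕ), 2 ≤ d → ∀ (z₀ az : ℝ), 0 < z₀ → 1 ≤ az → az < 2 →
      ∀ (x₀ : EuclideanSpace ℝ (Fin (d - 1))),
      ∀ (C : Set (EuclideanSpace ℝ (Fin (d - 1)) × ℝ)),
        C = {p | (∀ i, x₀ i ≤ p.1 i ∧ p.1 i ≤ x₀ i + az * z₀ / Real.sqrt (d - 1)) ∧
              z₀ ≤ p.2 ∧ p.2 ≤ 2 * z₀} →
      ∀ (φ : EuclideanSpace ℝ (Fin (d - 1)) × ℝ → EuclideanSpace ℝ (Fin (d - 1)) × ℝ),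
        (∀ x z, φ (x, z) =
          ((Real.sqrt (d - 1) / (az * z₀)) • (x - x₀), Real.logb 2 (z / z₀))) →
      Set.BijOn φ C {q | (∀ i, q.1 i ∈ Set.Icc (0:ℝ) 1) ∧ q.2 ∈ Set.Icc (0:ℝ) 1} ∧
      ∀ p ∈ C, ∀ q ∈ C,
        c₁ * (2 * Real.arsinh (Real.sqrt (‖p.1 - q.1‖ ^ 2 + (p.2 - q.2) ^ 2) /
            (2 * Real.sqrt (p.2 * q.2)))) ≤
          Real.sqrt (‖(φ p).1 - (φ q).1‖ ^ 2 + ((φ p).2 - (φ q).2) ^ 2) ∧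
        Real.sqrt (‖(φ p).1 - (φ q).1‖ ^ 2 + ((φ p).2 - (φ q).2) ^ 2) ≤
          c₂ * Real.sqrt d * (2 * Real.arsinh (Real.sqrt (‖p.1 - q.1‖ ^ 2 + (p.2 - q.2) ^ 2) /
            (2 * Real.sqrt (p.2 * q.2)))) := by
  refine ⟨1/2, 12, by norm_num, by norm_num, ?_⟩
  intro d hd z₀ az hz₀ haz1 haz2 x₀ C hC φ hφ
  have hd2 : (2:ℝ) ≤ (d:ℝ) := by exact_mod_cast hd
  have hd1 : (1:ℝ) ≤ (d:ℝ) - 1 := by linarith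
  have hs2 : Real.sqrt ((d:ℝ) - 1) ^ 2 = (d:ℝ) - 1 := Real.sq_sqrt (by linarith)
  have hs1 : 1 ≤ Real.sqrt ((d:ℝ) - 1) := Real.le_sqrt_of_sq_le (by nlinarith)
  have hs0 : 0 < Real.sqrt ((d:ℝ) - 1) := by linarith
  set s : ℝ := Real.sqrt ((d:ℝ) - 1) with hsdef
  have haz0 : (0:ℝ) < az := by linarith
  have hazz : 0 < az * z₀ := by positivity
  have hφ' : ∀ p : EuclideanSpace ℝ (Fin (d-1)) × ℝ,
      φ p = ((s / (az * z₀)) • (p.1 - x₀), Real.logb 2 (p.2 / z₀)) := fun p => hφ p.1 p.2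
  constructor
  · refine ⟨?_, ?_, ?_⟩
    · -- MapsTo
      intro p hp
      rw [hC] at hp
      obtain ⟨hx, hz1, hz2⟩ := hp
      rw [Set.mem_setOf_eq, hφ']
      refine ⟨fun i => ?_, ?_, ?_⟩
      · simp only [PiLp.smul_apply, PiLp.sub_apply, smul_eq_mul, Set.mem_Icc]
        obtain ⟨h1, h2⟩ := hx i
        constructor
        · exact mul_nonneg (by positivity) (by linarith)
        · calc s / (az * z₀) * (p.1 i - x₀ i) ≤ s / (az * z₀) * (az * z₀ / s) :=
                mul_le_mul_of_nonneg_left (by linarith) (by positivity)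
            _ = 1 := by field_simp
      · exact Real.logb_nonneg one_lt_two ((one_le_div hz₀).mpr hz1)
      · calc Real.logb 2 (p.2 / z₀) ≤ Real.logb 2 2 :=
              Real.logb_le_logb_of_le one_lt_two
                (div_pos (lt_of_lt_of_le hz₀ hz1) hz₀)
                (by rw [div_le_iff₀ hz₀]; linarith)
          _ = 1 := by simp
    · -- InjOn
      intro p hp q hq heq
      rw [hC] at hp hq
      rw [hφ' p, hφ' q] at heq
      have h1 : (s / (az * z₀)) • (p.1 - x₀) = (s / (az * z₀)) • (q.1 - x₀) :=
        congrArg Prod.fst heq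
      have h2 : Real.logb 2 (p.2 / z₀) = Real.logb 2 (q.2 / z₀) :=
        congrArg Prod.snd heq
      have hx : p.1 = q.1 := by
        have := smul_right_injective (EuclideanSpace ℝ (Fin (d-1)))
          (ne_of_gt (div_pos hs0 hazz)) h1
        exact sub_left_inj.mp this
      have hz : p.2 = q.2 := by
        have hpp : 0 < p.2 / z₀ := div_pos (lt_of_lt_of_le hz₀ hp.2.1) hz₀
        have hqq : 0 < q.2 / z₀ := div_pos (lt_of_lt_of_le hz₀ hq.2.1) hz₀
        have e : p.2 / z₀ = q.2 / z₀ := by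
          have := congrArg (fun t => (2:ℝ) ^ t) h2
          simpa [Real.rpow_logb two_pos (by norm_num : (2:ℝ) ≠ 1) hpp,
            Real.rpow_logb two_pos (by norm_num : (2:ℝ) ≠ 1) hqq] using this
        field_simp at e
        exact e
      exact Prod.ext hx hz
    · -- SurjOn
      intro w hw
      obtain ⟨hw1, hw2⟩ := hw
      refine ⟨(x₀ + ((az * z₀) / s) • w.1, z₀ * (2:ℝ) ^ w.2), ?_, ?_⟩
      · rw [hC, Set.mem_setOf_eq]
        refine ⟨fun i => ?_, ?_, ?_⟩
        · simp only [PiLp.add_apply, PiLp.smul_apply, smul_eq_mul]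
          obtain ⟨h1, h2⟩ := hw1 i
          constructor
          · nlinarith [mul_nonneg (le_of_lt (div_pos hazz hs0)) h1]
          · have : az * z₀ / s * w.1 i ≤ az * z₀ / s * 1 :=
              mul_le_mul_of_nonneg_left h2 (by positivity)
            linarith [this]
        · have h1 : (1:ℝ) ≤ (2:ℝ) ^ w.2 := by
            calc (1:ℝ) = (2:ℝ) ^ (0:ℝ) := by rw [Real.rpow_zero]
              _ ≤ (2:ℝ) ^ w.2 := by
                  apply Real.rpow_le_rpow_of_exponent_le one_le_two hw2.1
          nlinarith
        · have h1 : (2:ℝ) ^ w.2 ≤ 2 := by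
            calc (2:ℝ) ^ w.2 ≤ (2:ℝ) ^ (1:ℝ) := by
                  apply Real.rpow_le_rpow_of_exponent_le one_le_two hw2.2
              _ = 2 := by rw [Real.rpow_one]
          nlinarith
      · rw [hφ]
        refine Prod.ext ?_ ?_
        · show (s / (az * z₀)) • (x₀ + ((az * z₀) / s) • w.1 - x₀) = w.1
          rw [add_sub_cancel_left, smul_smul]
          rw [show s / (az * z₀) * (az * z₀ / s) = 1 by field_simp, one_smul]
        · show Real.logb 2 (z₀ * (2:ℝ) ^ w.2 / z₀) = w.2
          rw [mul_comm, mul_div_assoc, div_self hz₀.ne', mul_one,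
            Real.logb_rpow two_pos (by norm_num)]
  · intro p hp q hq
    rw [hC] at hp hq
    obtain ⟨hpx, hpz1, hpz2⟩ := hp
    obtain ⟨hqx, hqz1, hqz2⟩ := hq
    have hp2 : 0 < p.2 := lt_of_lt_of_le hz₀ hpz1
    have hq2 : 0 < q.2 := lt_of_lt_of_le hz₀ hqz1
    set N : ℝ := ‖p.1 - q.1‖ with hNdef
    set Z : ℝ := p.2 - q.2 with hZdef
    have hN0 : 0 ≤ N := norm_nonneg _
    -- bound on N
    have hNsq : N ^ 2 ≤ az ^ 2 * z₀ ^ 2 := by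
      have hco : ∀ i, |p.1 i - q.1 i| ≤ az * z₀ / s := by
        intro i
        obtain ⟨a1, a2⟩ := hpx i
        obtain ⟨b1, b2⟩ := hqx i
        rw [abs_le]
        constructor <;> linarith
      have h := helper_norm p.1 q.1 hco
      have hcast : ((d - 1 : ℕ) : ℝ) = (d:ℝ) - 1 := by
        have : 1 ≤ d := by omega
        push_cast [Nat.cast_sub this]
        ring
      rw [hcast] at h
      have he : ((d:ℝ) - 1) * (az * z₀ / s) ^ 2 = az ^ 2 * z₀ ^ 2 := by
        rw [div_pow, ← hs2]
        field_simp
      calc N ^ 2 ≤ ((d:ℝ) - 1) * (az * z₀ / s) ^ 2 := h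
        _ = az ^ 2 * z₀ ^ 2 := he
    have haz4 : az ^ 2 ≤ 4 := by
      have h := mul_le_mul haz2.le haz2.le (by linarith) (by norm_num)
      rw [pow_two]; linarith
    have hZabs : |Z| ≤ z₀ := by
      rw [abs_le]; constructor <;> [skip; skip] <;> simp only [hZdef] <;> linarith
    -- the map differences
    have hφp1 : (φ p).1 - (φ q).1 = (s / (az * z₀)) • (p.1 - q.1) := by
      rw [hφ' p, hφ' q]
      dsimp only
      rw [← smul_sub, sub_sub_sub_cancel_right]
    have hn1 : ‖(φ p).1 - (φ q).1‖ = s / (az * z₀) * N := by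
      rw [hφp1, norm_smul, Real.norm_eq_abs, abs_of_pos (div_pos hs0 hazz)]
    set L : ℝ := Real.log p.2 - Real.log q.2 with hLdef
    have hφ2 : (φ p).2 - (φ q).2 = L / Real.log 2 := by
      rw [hφ' p, hφ' q]
      dsimp only
      rw [Real.logb, Real.logb, div_sub_div_same,
        Real.log_div hp2.ne' hz₀.ne', Real.log_div hq2.ne' hz₀.ne', hLdef]
      ring_nf
    have hlog2pos : 0 < Real.log 2 := Real.log_pos one_lt_two
    have hlog2le : Real.log 2 ≤ 1 := by
      have := Real.log_le_sub_one_of_pos (by norm_num : (0:ℝ) < 2); linarith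
    have hlog2ge : (1:ℝ)/2 ≤ Real.log 2 := by
      have := Real.log_two_gt_d9; linarith
    -- |L| bounds
    have hLb : |Z| / (2 * z₀) ≤ |L| ∧ |L| ≤ |Z| / z₀ := by
      rcases le_total q.2 p.2 with h | h
      · obtain ⟨h1, h2⟩ := helper_log hz₀ hqz1 hpz2 h
        have hZ0 : 0 ≤ Z := by rw [hZdef]; linarith
        have hL0 : 0 ≤ L := by
          have : (0:ℝ) ≤ (p.2 - q.2) / (2 * z₀) := div_nonneg (by linarith) (by linarith)
          rw [hLdef]; linarith
        rw [abs_of_nonneg hL0, abs_of_nonneg hZ0, hLdef, hZdef]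
        exact ⟨h1, h2⟩
      · obtain ⟨h1, h2⟩ := helper_log hz₀ hpz1 hqz2 h
        have hZ0 : Z ≤ 0 := by rw [hZdef]; linarith
        have hL0 : L ≤ 0 := by
          have : (0:ℝ) ≤ (q.2 - p.2) / (2 * z₀) := div_nonneg (by linarith) (by linarith)
          rw [hLdef]; linarith
        rw [abs_of_nonpos hL0, abs_of_nonpos hZ0, hLdef, hZdef, neg_sub, neg_sub]
        exact ⟨h1, h2⟩
    -- sqrt(p.2 q.2) bounds
    have hsqg : z₀ ≤ Real.sqrt (p.2 * q.2) := by
      have : z₀ ^ 2 ≤ p.2 * q.2 := by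
        rw [pow_two]; exact mul_le_mul hpz1 hqz1 hz₀.le hp2.le
      calc z₀ = Real.sqrt (z₀ ^ 2) := (Real.sqrt_sq hz₀.le).symm
        _ ≤ Real.sqrt (p.2 * q.2) := Real.sqrt_le_sqrt this
    have hsql : Real.sqrt (p.2 * q.2) ≤ 2 * z₀ := by
      have : p.2 * q.2 ≤ (2 * z₀) ^ 2 := by
        rw [pow_two]; exact mul_le_mul hpz2 hqz2 hq2.le (by linarith)
      calc Real.sqrt (p.2 * q.2) ≤ Real.sqrt ((2 * z₀) ^ 2) := Real.sqrt_le_sqrt this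
        _ = 2 * z₀ := Real.sqrt_sq (by linarith)
    rw [hn1, hφ2]
    set D : ℝ := Real.sqrt (N ^ 2 + Z ^ 2) with hDdef
    have hD0 : 0 ≤ D := Real.sqrt_nonneg _
    have hDsq : D ^ 2 = N ^ 2 + Z ^ 2 := Real.sq_sqrt (by positivity)
    have hDle : D ≤ 3 * z₀ := by
      have hZsq : Z ^ 2 ≤ z₀ ^ 2 := by
        have h := pow_le_pow_left₀ (abs_nonneg Z) hZabs 2
        rwa [sq_abs] at h
      have hmm : az ^ 2 * z₀ ^ 2 ≤ 4 * z₀ ^ 2 :=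
        mul_le_mul_of_nonneg_right haz4 (sq_nonneg z₀)
      have h9 : N ^ 2 + Z ^ 2 ≤ (3 * z₀) ^ 2 := by
        have : (3 * z₀) ^ 2 = 9 * z₀ ^ 2 := by ring
        rw [this]; linarith [sq_nonneg z₀]
      calc D ≤ Real.sqrt ((3 * z₀) ^ 2) := Real.sqrt_le_sqrt h9
        _ = 3 * z₀ := Real.sqrt_sq (by linarith)
    set u : ℝ := D / (2 * Real.sqrt (p.2 * q.2)) with hudef
    have hu0 : 0 ≤ u := by positivity
    have hu2 : u ≤ 2 := by
      rw [hudef, div_le_iff₀ (by positivity)]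
      linarith
    have huD1 : u ≤ D / (2 * z₀) :=
      div_le_div_of_nonneg_left hD0 (by positivity) (by linarith)
    have huD2 : D / (4 * z₀) ≤ u := by
      rw [hudef]
      exact div_le_div_of_nonneg_left hD0 (by positivity) (by linarith)
    constructor
    · -- lower bound
      have hcomp : (D / (2 * z₀)) ^ 2 ≤ (s / (az * z₀) * N) ^ 2 + (L / Real.log 2) ^ 2 := by
        have e1 : (s / (az * z₀) * N) ^ 2 = ((d:ℝ) - 1) * N ^ 2 / (az ^ 2 * z₀ ^ 2) := by
          rw [mul_pow, div_pow, ← hs2]; ring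
        have c1 : N ^ 2 / (4 * z₀ ^ 2) ≤ (s / (az * z₀) * N) ^ 2 := by
          rw [e1, div_le_div_iff₀ (by positivity) (by positivity)]
          calc N ^ 2 * (az ^ 2 * z₀ ^ 2) = az ^ 2 * (N ^ 2 * z₀ ^ 2) := by ring
            _ ≤ 4 * (N ^ 2 * z₀ ^ 2) :=
                mul_le_mul_of_nonneg_right haz4 (by positivity)
            _ ≤ (4 * ((d:ℝ) - 1)) * (N ^ 2 * z₀ ^ 2) :=
                mul_le_mul_of_nonneg_right (by linarith) (by positivity)
            _ = ((d:ℝ) - 1) * N ^ 2 * (4 * z₀ ^ 2) := by ring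
        have c2 : Z ^ 2 / (4 * z₀ ^ 2) ≤ (L / Real.log 2) ^ 2 := by
          have h2 : (|Z| / (2 * z₀)) ^ 2 ≤ |L| ^ 2 :=
            pow_le_pow_left₀ (by positivity) hLb.1 2
          rw [div_pow, sq_abs, sq_abs] at h2
          have hlg1 : Real.log 2 ^ 2 ≤ 1 := by
            rw [pow_two]
            calc Real.log 2 * Real.log 2 ≤ 1 * 1 :=
                mul_le_mul hlog2le hlog2le hlog2pos.le (by norm_num)
              _ = 1 := by norm_num
          have h3 : L ^ 2 ≤ (L / Real.log 2) ^ 2 := by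
            rw [div_pow, le_div_iff₀ (by positivity)]
            exact mul_le_of_le_one_right (sq_nonneg L) hlg1
          have : (2 * z₀) ^ 2 = 4 * z₀ ^ 2 := by ring
          rw [this] at h2
          linarith
        have e2 : (D / (2 * z₀)) ^ 2 = N ^ 2 / (4 * z₀ ^ 2) + Z ^ 2 / (4 * z₀ ^ 2) := by
          rw [div_pow, hDsq]
          rw [show (2 * z₀) ^ 2 = 4 * z₀ ^ 2 by ring]
          ring
        rw [e2]
        linarith
      calc 1 / 2 * (2 * Real.arsinh u) = Real.arsinh u := by ring
        _ ≤ u := helper_arsinh_le hu0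
        _ ≤ D / (2 * z₀) := huD1
        _ ≤ Real.sqrt ((s / (az * z₀) * N) ^ 2 + (L / Real.log 2) ^ 2) :=
            (Real.le_sqrt (by positivity) (by positivity)).mpr hcomp
    · -- upper bound
      have hd0 : (0:ℝ) ≤ Real.sqrt d := Real.sqrt_nonneg _
      have hdsq : Real.sqrt (d:ℝ) ^ 2 = (d:ℝ) := Real.sq_sqrt (by positivity)
      have hA2 : (s / (az * z₀) * N) ^ 2 + (L / Real.log 2) ^ 2
          ≤ (2 * Real.sqrt d * D / z₀) ^ 2 := by
        have e1 : (s / (az * z₀) * N) ^ 2 = ((d:ℝ) - 1) * N ^ 2 / (az ^ 2 * z₀ ^ 2) := by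
          rw [mul_pow, div_pow, ← hs2]; ring
        have c1 : (s / (az * z₀) * N) ^ 2 ≤ ((d:ℝ) - 1) * N ^ 2 / z₀ ^ 2 := by
          rw [e1]
          apply div_le_div_of_nonneg_left (by positivity) (by positivity)
          have : (1:ℝ) ≤ az ^ 2 := by
            rw [pow_two]
            calc (1:ℝ) = 1 * 1 := by norm_num
              _ ≤ az * az := mul_le_mul haz1 haz1 (by norm_num) haz0.le
          calc z₀ ^ 2 = 1 * z₀ ^ 2 := by ring
            _ ≤ az ^ 2 * z₀ ^ 2 := mul_le_mul_of_nonneg_right this (sq_nonneg z₀)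
        have c2 : (L / Real.log 2) ^ 2 ≤ 4 * Z ^ 2 / z₀ ^ 2 := by
          have h2 : |L| ^ 2 ≤ (|Z| / z₀) ^ 2 := pow_le_pow_left₀ (abs_nonneg _) hLb.2 2
          rw [div_pow, sq_abs, sq_abs] at h2
          have hq : (1/4 : ℝ) ≤ Real.log 2 ^ 2 := by
            have h := pow_le_pow_left₀ (by norm_num : (0:ℝ) ≤ 1/2) hlog2ge 2
            norm_num at h
            linarith
          calc (L / Real.log 2) ^ 2 = L ^ 2 / Real.log 2 ^ 2 := by rw [div_pow]
            _ ≤ L ^ 2 / (1/4 : ℝ) :=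
                div_le_div_of_nonneg_left (sq_nonneg L) (by norm_num) hq
            _ = 4 * L ^ 2 := by ring
            _ ≤ 4 * (Z ^ 2 / z₀ ^ 2) := by linarith
            _ = 4 * Z ^ 2 / z₀ ^ 2 := by ring
        have e3 : (2 * Real.sqrt d * D / z₀) ^ 2 = 4 * d * (N ^ 2 + Z ^ 2) / z₀ ^ 2 := by
          rw [div_pow, mul_pow, mul_pow, hdsq, hDsq]
          ring
        rw [e3]
        have hnum : ((d:ℝ) - 1) * N ^ 2 + 4 * Z ^ 2 ≤ 4 * d * (N ^ 2 + Z ^ 2) := by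
          have t1 : ((d:ℝ) - 1) * N ^ 2 ≤ (4 * d) * N ^ 2 :=
            mul_le_mul_of_nonneg_right (by linarith) (sq_nonneg N)
          have t2 : (4:ℝ) * Z ^ 2 ≤ (4 * d) * Z ^ 2 :=
            mul_le_mul_of_nonneg_right (by linarith) (sq_nonneg Z)
          have : (4 * (d:ℝ)) * N ^ 2 + (4 * d) * Z ^ 2 = 4 * d * (N ^ 2 + Z ^ 2) := by ring
          linarith
        have : ((d:ℝ) - 1) * N ^ 2 / z₀ ^ 2 + 4 * Z ^ 2 / z₀ ^ 2
            ≤ 4 * d * (N ^ 2 + Z ^ 2) / z₀ ^ 2 := by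
          rw [← add_div]
          exact (div_le_div_iff_of_pos_right (by positivity)).mpr hnum
        linarith
      calc Real.sqrt ((s / (az * z₀) * N) ^ 2 + (L / Real.log 2) ^ 2)
          ≤ Real.sqrt ((2 * Real.sqrt d * D / z₀) ^ 2) := Real.sqrt_le_sqrt hA2
        _ = 2 * Real.sqrt d * D / z₀ := Real.sqrt_sq (by positivity)
        _ ≤ 8 * Real.sqrt d * u := by
            have hDu : D ≤ u * (4 * z₀) := (div_le_iff₀ (by positivity)).mp huD2
            calc 2 * Real.sqrt d * D / z₀ = Real.sqrt d * (2 * D / z₀) := by ring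
              _ ≤ Real.sqrt d * (8 * u) := by
                  apply mul_le_mul_of_nonneg_left _ hd0
                  rw [div_le_iff₀ hz₀]
                  linarith [hDu]
              _ = 8 * Real.sqrt d * u := by ring
        _ ≤ 12 * Real.sqrt d * (2 * Real.arsinh u) := by
            have h3 := helper_le_arsinh hu0 hu2
            calc 8 * Real.sqrt d * u = Real.sqrt d * (8 * u) := by ring
              _ ≤ Real.sqrt d * (24 * Real.arsinh u) :=
                  mul_le_mul_of_nonneg_left (by linarith) hd0
              _ = 12 * Real.sqrt d * (2 * Real.arsinh u) := by ring
end

section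
/- Let d ≥ 2 be an integer and let B = {(x, z) : uᵢ ≤ xᵢ ≤ vᵢ for each i ∈ {1,…,d−1}, and z_min ≤ z ≤ z_max} be an axis-aligned horobox in the upper half-space model, where 0 < z_min ≤ z_max. Let s = max( ln(z_max/z_min), max over i of 2·arsinh((vᵢ − uᵢ)/(2·z_max)) ); here ln(z_max/z_min) is the hyperbolic distance between the bottom and top facets of B, and 2·arsinh((vᵢ − uᵢ)/(2·z_max)) is the minimum hyperbolic distance between the two opposite vertical facets of B in direction i. Then every pair of points p, q ∈ B satisfies ρ(p, q) ≤ (d + 1)·s. -/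
lemma sqrt_helper6 {a c : ℝ} (ha : 0 < a) (hc : 0 < c) (M : ℝ) (hM : 0 ≤ M) :
    Real.sqrt (1 + (Real.sqrt (M + (a - c)^2) / (2 * Real.sqrt (a*c)))^2)
      = Real.sqrt (M + (a + c)^2) / (2 * Real.sqrt (a*c)) := by
  have hac : (0:ℝ) < a * c := mul_pos ha hc
  have h1 : (2 * Real.sqrt (a*c))^2 = 4 * (a*c) := by
    rw [mul_pow, Real.sq_sqrt hac.le]; ring
  have h2 : 1 + (Real.sqrt (M + (a - c)^2) / (2 * Real.sqrt (a*c)))^2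
      = (M + (a + c)^2) / (2 * Real.sqrt (a*c))^2 := by
    rw [div_pow, Real.sq_sqrt (by positivity), h1]
    field_simp
    ring
  rw [h2, Real.sqrt_div (by positivity), Real.sqrt_sq (by positivity)]

lemma tri6 (m : ℕ) (x y w : EuclideanSpace ℝ (Fin m)) (a b c : ℝ)
    (ha : 0 < a) (hb : 0 < b) (hc : 0 < c) :
    Real.arsinh (Real.sqrt (‖x - y‖^2 + (a - b)^2) / (2 * Real.sqrt (a*b)))
      ≤ Real.arsinh (Real.sqrt (‖x - w‖^2 + (a - c)^2) / (2 * Real.sqrt (a*c)))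
        + Real.arsinh (Real.sqrt (‖w - y‖^2 + (c - b)^2) / (2 * Real.sqrt (c*b))) := by
  set E := WithLp 2 (EuclideanSpace ℝ (Fin m) × ℝ)
  let P : E := (WithLp.equiv 2 _).symm (x, a)
  let W : E := (WithLp.equiv 2 _).symm (w, c)
  let Q : E := (WithLp.equiv 2 _).symm (y, b)
  let W' : E := (WithLp.equiv 2 _).symm (w, -c)
  have H := EuclideanGeometry.mul_dist_le_mul_dist_add_mul_dist P W Q W'
  have nrm : ∀ (u1 v1 : EuclideanSpace ℝ (Fin m)) (s t : ℝ),
      ‖(WithLp.equiv 2 (EuclideanSpace ℝ (Fin m) × ℝ)).symm (u1, s) -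
        (WithLp.equiv 2 (EuclideanSpace ℝ (Fin m) × ℝ)).symm (v1, t)‖
        = Real.sqrt (‖u1 - v1‖^2 + (s - t)^2) := by
    intro u1 v1 s t
    rw [WithLp.equiv_symm_apply, ← WithLp.toLp_sub, Prod.mk_sub_mk, WithLp.prod_norm_eq_of_L2]
    simp [sq_abs]
  simp only [E, dist_eq_norm, P, W, Q, W', nrm, sub_self, norm_zero, sub_neg_eq_add] at H
  have h0 : Real.sqrt (0^2 + (c + c)^2) = 2*c := by
    rw [show (0:ℝ)^2 + (c+c)^2 = (2*c)^2 by ring, Real.sqrt_sq (by positivity)]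
  rw [h0, norm_sub_rev y w, show (b+c)^2 = (c+b)^2 by ring] at H
  have key : 2*c*Real.sqrt (‖x - y‖^2 + (a - b)^2)
      ≤ Real.sqrt (‖x - w‖^2 + (a - c)^2) * Real.sqrt (‖w - y‖^2 + (c + b)^2)
        + Real.sqrt (‖w - y‖^2 + (c - b)^2) * Real.sqrt (‖x - w‖^2 + (a + c)^2) := by
    linarith [H]
  rw [← Real.arsinh_sinh (Real.arsinh _ + Real.arsinh _)]
  apply Real.arsinh_le_arsinh.mpr
  rw [Real.sinh_add, Real.sinh_arsinh, Real.sinh_arsinh, Real.cosh_arsinh, Real.cosh_arsinh,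
    sqrt_helper6 ha hc _ (by positivity), sqrt_helper6 hc hb _ (by positivity),
    div_mul_div_comm, div_mul_div_comm]
  have e1 : Real.sqrt (a*c) * Real.sqrt (c*b) = Real.sqrt (a*b) * c := by
    rw [← Real.sqrt_mul (by positivity), show a*c*(c*b) = (a*b)*c^2 by ring,
      Real.sqrt_mul (by positivity), Real.sqrt_sq hc.le]
  rw [show (2*Real.sqrt (a*c))*(2*Real.sqrt (c*b)) = 2*Real.sqrt (a*b)*(2*c) from by
      linear_combination 4 * e1,
    ← add_div, div_le_div_iff₀ (by positivity) (by positivity)]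
  have hab : (0:ℝ) ≤ Real.sqrt (a*b) := Real.sqrt_nonneg _
  nlinarith [mul_nonneg (sub_nonneg.mpr key) hab]

lemma nsinh6 (n : ℕ) (t : ℝ) (ht : 0 ≤ t) : (n:ℝ) * Real.sinh t ≤ Real.sinh (n * t) := by
  induction n with
  | zero => simp
  | succ k ih =>
    have h1 : Real.sinh (((k:ℝ)+1) * t) = Real.sinh ((k:ℝ)*t) * Real.cosh t
        + Real.cosh ((k:ℝ)*t) * Real.sinh t := by
      rw [add_mul, one_mul, Real.sinh_add]
    push_cast
    rw [h1]
    nlinarith [Real.one_le_cosh t, Real.one_le_cosh ((k:ℝ)*t),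
      Real.sinh_nonneg_iff.mpr (mul_nonneg (Nat.cast_nonneg k) ht),
      Real.sinh_nonneg_iff.mpr ht, ih]

lemma arsinh_vert6 (z zm : ℝ) (hz : 0 < z) (hzm : z ≤ zm) :
    Real.arsinh ((zm - z) / (2 * Real.sqrt (z * zm))) = Real.log (zm / z) / 2 := by
  have hzm0 : 0 < zm := lt_of_lt_of_le hz hzm
  have h2 : (Real.exp (Real.log (zm/z)/2))^2 = zm/z := by
    rw [sq, ← Real.exp_add, show Real.log (zm/z)/2 + Real.log (zm/z)/2 = Real.log (zm/z) by ring,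
      Real.exp_log (by positivity)]
  have hexp : Real.sqrt (zm/z) = Real.exp (Real.log (zm/z)/2) := by
    conv_lhs => rw [← h2]
    exact Real.sqrt_sq (Real.exp_pos _).le
  have hA : (0:ℝ) < Real.sqrt z := Real.sqrt_pos.mpr hz
  have hB : (0:ℝ) < Real.sqrt zm := Real.sqrt_pos.mpr hzm0
  have hA2 : Real.sqrt z ^ 2 = z := Real.sq_sqrt hz.le
  have hB2 : Real.sqrt zm ^ 2 = zm := Real.sq_sqrt hzm0.le
  have hsinh : Real.sinh (Real.log (zm/z)/2) = (zm - z) / (2 * Real.sqrt (z * zm)) := by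
    rw [Real.sinh_eq, Real.exp_neg, ← hexp, Real.sqrt_div hzm0.le z, Real.sqrt_mul hz.le]
    rw [show (Real.sqrt zm / Real.sqrt z)⁻¹ = Real.sqrt z / Real.sqrt zm by rw [inv_div]]
    rw [div_sub_div _ _ hA.ne' hB.ne', div_div]
    rw [show Real.sqrt zm * Real.sqrt zm - Real.sqrt z * Real.sqrt z = zm - z by
      nlinarith [hA2, hB2]]
    congr 1
    ring
  rw [← hsinh, Real.arsinh_sinh]

/-- Any two points of an axis-aligned horobox `B` are at hyperbolic distance at most
`(d+1)·s`, where `s` is the largest of the distances between non-adjacent facets of `B`. -/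
theorem stmt_6 (d : ℕ) (hd : 2 ≤ d)
    (u v : Fin (d - 1) → ℝ) (zmin zmax : ℝ) (hzmin : 0 < zmin) (hzz : zmin ≤ zmax)
    (B : Set (EuclideanSpace ℝ (Fin (d - 1)) × ℝ))
    (hB : B = {p | (∀ i, u i ≤ p.1 i ∧ p.1 i ≤ v i) ∧ zmin ≤ p.2 ∧ p.2 ≤ zmax})
    (s : ℝ)
    (hs : s = max (Real.log (zmax / zmin))
      (⨆ i : Fin (d - 1), 2 * Real.arsinh ((v i - u i) / (2 * zmax)))) :
    ∀ p ∈ B, ∀ q ∈ B,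
      2 * Real.arsinh (Real.sqrt (‖p.1 - q.1‖ ^ 2 + (p.2 - q.2) ^ 2) /
          (2 * Real.sqrt (p.2 * q.2))) ≤ (d + 1) * s := by
  subst hB
  intro p hp q hq
  obtain ⟨hpx, hpz1, hpz2⟩ := hp
  obtain ⟨hqx, hqz1, hqz2⟩ := hq
  have hzmax : (0:ℝ) < zmax := lt_of_lt_of_le hzmin hzz
  have hp2 : (0:ℝ) < p.2 := lt_of_lt_of_le hzmin hpz1
  have hq2 : (0:ℝ) < q.2 := lt_of_lt_of_le hzmin hqz1
  have hs0 : 0 ≤ s := by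
    rw [hs]
    exact le_trans (Real.log_nonneg ((one_le_div hzmin).mpr hzz)) (le_max_left _ _)
  -- sup bound
  have hsup : ∀ i, 2 * Real.arsinh ((v i - u i) / (2 * zmax)) ≤ s := by
    intro i
    rw [hs]
    refine le_trans ?_ (le_max_right _ _)
    exact le_ciSup (f := fun i : Fin (d-1) => 2 * Real.arsinh ((v i - u i) / (2 * zmax)))
      (Set.Finite.bddAbove (Set.finite_range _)) i
  -- vertical bounds
  have vert : ∀ z : ℝ, zmin ≤ z → z ≤ zmax →
      Real.arsinh ((zmax - z) / (2 * Real.sqrt (z * zmax))) ≤ s / 2 := by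
    intro z h1 h2
    have hz0 : 0 < z := lt_of_lt_of_le hzmin h1
    rw [arsinh_vert6 z zmax hz0 h2]
    have : Real.log (zmax / z) ≤ Real.log (zmax / zmin) := by
      apply Real.log_le_log (by positivity)
      exact div_le_div_of_nonneg_left hzmax.le hzmin h1
    have hls : Real.log (zmax / zmin) ≤ s := by rw [hs]; exact le_max_left _ _
    linarith
  -- horizontal bound
  have hhor : Real.arsinh (‖p.1 - q.1‖ / (2 * zmax)) ≤ ((d:ℝ) - 1) * s / 2 := by
    have hb1 : ‖p.1 - q.1‖ ≤ ∑ i, |p.1 i - q.1 i| := by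
      rw [EuclideanSpace.norm_eq]
      simp only [PiLp.sub_apply, Real.norm_eq_abs]
      exact le_trans (Real.sqrt_le_sqrt (Finset.sum_sq_le_sq_sum_of_nonneg
        (fun i _ => abs_nonneg _))) (Real.sqrt_sq (by positivity)).le
    have hb2 : ∀ i, |p.1 i - q.1 i| ≤ 2 * zmax * Real.sinh (s/2) := by
      intro i
      have h1 := (hpx i).1
      have h2 := (hpx i).2
      have h3 := (hqx i).1
      have h4 := (hqx i).2
      have h5 : (v i - u i) / (2 * zmax) ≤ Real.sinh (s/2) := by
        have := hsup i
        have h6 : Real.arsinh ((v i - u i) / (2 * zmax)) ≤ s/2 := by linarith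
        calc (v i - u i) / (2 * zmax) = Real.sinh (Real.arsinh ((v i - u i) / (2 * zmax))) :=
              (Real.sinh_arsinh _).symm
          _ ≤ Real.sinh (s/2) := Real.sinh_le_sinh.mpr h6
      have h5' : v i - u i ≤ 2 * zmax * Real.sinh (s/2) := by
        rw [div_le_iff₀ (by positivity)] at h5
        linarith
      rw [abs_sub_le_iff]
      constructor <;> linarith
    have hb3 : ‖p.1 - q.1‖ ≤ ((d:ℝ) - 1) * (2 * zmax * Real.sinh (s/2)) := by
      calc ‖p.1 - q.1‖ ≤ ∑ i, |p.1 i - q.1 i| := hb1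
        _ ≤ ∑ _i : Fin (d-1), 2 * zmax * Real.sinh (s/2) :=
            Finset.sum_le_sum (fun i _ => hb2 i)
        _ = ((d:ℝ) - 1) * (2 * zmax * Real.sinh (s/2)) := by
            rw [Finset.sum_const, Finset.card_univ, Fintype.card_fin, nsmul_eq_mul]
            congr 1
            rw [Nat.cast_sub (by omega), Nat.cast_one]
    have hb4 : ‖p.1 - q.1‖ / (2 * zmax) ≤ Real.sinh (((d:ℝ) - 1) * (s/2)) := by
      have hcast : ((d:ℝ) - 1) = ((d - 1 : ℕ) : ℝ) := by
        rw [Nat.cast_sub (by omega), Nat.cast_one]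
      rw [hcast]
      refine le_trans ?_ (nsinh6 (d-1) (s/2) (by linarith))
      rw [div_le_iff₀ (by positivity)]
      rw [hcast] at hb3
      nlinarith [hb3]
    calc Real.arsinh (‖p.1 - q.1‖ / (2 * zmax))
        ≤ Real.arsinh (Real.sinh (((d:ℝ) - 1) * (s/2))) := Real.arsinh_le_arsinh.mpr hb4
      _ = ((d:ℝ) - 1) * (s/2) := Real.arsinh_sinh _
      _ = ((d:ℝ) - 1) * s / 2 := by ring
  -- assembly
  have T1 := tri6 (d-1) p.1 q.1 p.1 p.2 q.2 zmax hp2 hq2 hzmax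
  have T2 := tri6 (d-1) p.1 q.1 q.1 zmax q.2 zmax hzmax hq2 hzmax
  simp only [sub_self, norm_zero] at T1 T2
  have n1 : Real.sqrt ((0:ℝ)^2 + (p.2 - zmax)^2) = zmax - p.2 := by
    rw [show (0:ℝ)^2 + (p.2 - zmax)^2 = (zmax - p.2)^2 by ring,
      Real.sqrt_sq (by linarith)]
  have n2 : Real.sqrt ((0:ℝ)^2 + (zmax - q.2)^2) = zmax - q.2 := by
    rw [show (0:ℝ)^2 + (zmax - q.2)^2 = (zmax - q.2)^2 by ring,
      Real.sqrt_sq (by linarith)]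
  have n3 : Real.sqrt (‖p.1 - q.1‖^2 + (0:ℝ)^2) = ‖p.1 - q.1‖ := by
    rw [show ‖p.1 - q.1‖^2 + (0:ℝ)^2 = ‖p.1 - q.1‖^2 by ring,
      Real.sqrt_sq (norm_nonneg _)]
  rw [n1, mul_comm zmax q.2] at T1
  rw [n2, n3, Real.sqrt_mul_self hzmax.le, mul_comm zmax q.2] at T2
  have V1 := vert p.2 hpz1 hpz2
  have V2 := vert q.2 hqz1 hqz2
  linarith [T1, T2, V1, V2, hhor]
end

section
/- Let d ≥ 2 be an integer and set b = 2^{1 − 1/d}. For every real t ≥ 0 and every r ≥ 1, one has Σ_{h=0}^{⌊log_b r⌋} (2t/r)·(b/2)^h + Σ_{h=⌈log_b r⌉}^{∞} (h − log_b r)·(t/2^h) ≤ K·d·t/r for some absolute constant K > 0 independent of d, t, r. -/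
/-- The summation bounding the expected patching cost of a crossing point under the
non-uniform portal placement: with `b = 2^{1−1/d}`, the total cost is `O(d·t/r)`. -/
theorem stmt_10 :
    ∃ K : ℝ, 0 < K ∧ ∀ (d : ℕ), 2 ≤ d → ∀ t r : ℝ, 0 ≤ t → 1 ≤ r →
      ∀ b : ℝ, b = (2 : ℝ) ^ ((1 : ℝ) - 1 / d) →
      (∑ h ∈ Finset.range (⌊Real.logb b r⌋₊ + 1), (2 * t / r) * (b / 2) ^ h) +
        (∑' h : ℕ, (((h + ⌈Real.logb b r⌉₊ : ℕ) : ℝ) - Real.logb b r) *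
          (t / 2 ^ (h + ⌈Real.logb b r⌉₊))) ≤ K * d * t / r := by
  refine ⟨10, by norm_num, ?_⟩
  intro d hd t r ht hr b hb
  have hd1 : (1:ℝ) ≤ d := by exact_mod_cast Nat.one_le_of_lt hd
  have hd2 : (2:ℝ) ≤ d := by exact_mod_cast hd
  have hdpos : (0:ℝ) < d := by linarith
  have hr0 : (0:ℝ) < r := by linarith
  set x : ℝ := 1 / (d:ℝ) with hx
  have hx0 : 0 < x := by positivity
  have hx1 : x ≤ 1/2 := by
    rw [hx, div_le_div_iff₀ hdpos (by norm_num)]; linarith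
  have hb0 : 0 < b := by rw [hb]; positivity
  have hb1 : 1 < b := by
    rw [hb]
    exact Real.one_lt_rpow_iff_of_pos (by norm_num) |>.2 (Or.inl ⟨by norm_num, by linarith⟩)
  have hble2 : b ≤ 2 := by
    rw [hb]
    calc (2:ℝ) ^ ((1:ℝ) - 1/d) ≤ (2:ℝ) ^ (1:ℝ) :=
          Real.rpow_le_rpow_of_exponent_le (by norm_num) (by linarith)
      _ = 2 := Real.rpow_one 2
  -- b/2 = 2^(-x)
  have hb2 : b / 2 = ((2:ℝ) ^ x)⁻¹ := by
    rw [hb, Real.rpow_sub (by norm_num), Real.rpow_one]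
    field_simp
  have h2x : (1:ℝ) + x/2 ≤ (2:ℝ) ^ x := by
    have h1 : x * Real.log 2 + 1 ≤ Real.exp (x * Real.log 2) := Real.add_one_le_exp _
    have h2 : (2:ℝ) ^ x = Real.exp (x * Real.log 2) := by
      rw [Real.rpow_def_of_pos (by norm_num), mul_comm]
    have hlog : (1:ℝ)/2 ≤ Real.log 2 := by
      have := Real.log_two_gt_d9; linarith
    have h4 : x * (1/2) ≤ x * Real.log 2 := mul_le_mul_of_nonneg_left hlog hx0.le
    linarith
  have hq : b / 2 ≤ 1 - x/3 := by
    rw [hb2]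
    have h2xpos : (0:ℝ) < 1 + x/2 := by linarith
    have : ((2:ℝ) ^ x)⁻¹ ≤ (1 + x/2)⁻¹ := by
      apply inv_anti₀ h2xpos h2x
    apply this.trans
    rw [inv_le_iff_one_le_mul₀ h2xpos] at *
    nlinarith
  have hq0 : 0 ≤ b / 2 := by positivity
  have hq1 : b / 2 < 1 := by nlinarith
  -- First sum bound
  have hS1 : ∑ h ∈ Finset.range (⌊Real.logb b r⌋₊ + 1), (b/2) ^ h ≤ 3 * d := by
    calc ∑ h ∈ Finset.range (⌊Real.logb b r⌋₊ + 1), (b/2) ^ h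
        ≤ ∑' h : ℕ, (b/2) ^ h := by
          apply Summable.sum_le_tsum _ (fun i _ => by positivity)
            (summable_geometric_of_lt_one hq0 hq1)
      _ = (1 - b/2)⁻¹ := tsum_geometric_of_lt_one hq0 hq1
      _ ≤ 3 * d := by
          rw [inv_le_iff_one_le_mul₀ (by linarith)]
          have : x/3 ≤ 1 - b/2 := by linarith
          have h3 : 3 * (d:ℝ) * (x/3) = 1 := by
            rw [hx]; field_simp
          nlinarith
  set L := Real.logb b r with hL
  have hL0 : 0 ≤ L := Real.logb_nonneg hb1 hr
  set m := ⌈L⌉₊ with hm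
  have hmL : L ≤ (m:ℝ) := Nat.le_ceil L
  have hmL' : (m:ℝ) ≤ L + 1 := by
    have := Nat.ceil_lt_add_one hL0
    linarith
  have hrle : r ≤ 2 ^ m := by
    have h1 : r = b ^ L := (Real.rpow_logb hb0 (ne_of_gt hb1) hr0).symm
    have h2 : b ^ L ≤ (2:ℝ) ^ L := Real.rpow_le_rpow hb0.le hble2 hL0
    have h3 : (2:ℝ) ^ L ≤ (2:ℝ) ^ (m:ℝ) :=
      Real.rpow_le_rpow_of_exponent_le (by norm_num) hmL
    have h4 : (2:ℝ) ^ (m:ℝ) = (2:ℝ) ^ m := Real.rpow_natCast 2 m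
    linarith
  -- second sum
  have hfle : ∀ h : ℕ, (((h + m : ℕ) : ℝ) - L) * (t / 2 ^ (h + m))
      ≤ ((h:ℝ) + 1) * (t/r) * (1/2) ^ h := by
    intro h
    have h1 : (((h + m : ℕ) : ℝ) - L) ≤ (h:ℝ) + 1 := by
      push_cast; linarith
    have h2 : t / 2 ^ (h + m) ≤ (t/r) * (1/2) ^ h := by
      rw [pow_add]
      rw [div_le_iff₀ (by positivity)]
      have h2m : (0:ℝ) < 2 ^ m := by positivity
      have : (t/r) * (1/2:ℝ) ^ h * (2 ^ h * 2 ^ m) = t * (2^m / r) := by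
        rw [one_div, inv_pow]; field_simp
      rw [this]
      have h5 : (1:ℝ) ≤ 2^m / r := (one_le_div hr0).2 hrle
      nlinarith
    have h0 : (0:ℝ) ≤ ((h + m : ℕ) : ℝ) - L := by
      push_cast
      have : (0:ℝ) ≤ (h:ℝ) := Nat.cast_nonneg h
      linarith
    have h0' : (0:ℝ) ≤ t / 2 ^ (h + m) := by positivity
    calc (((h + m : ℕ) : ℝ) - L) * (t / 2 ^ (h + m))
        ≤ ((h:ℝ) + 1) * (t / 2 ^ (h + m)) := mul_le_mul_of_nonneg_right h1 h0'
      _ ≤ ((h:ℝ) + 1) * ((t/r) * (1/2) ^ h) := by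
          apply mul_le_mul_of_nonneg_left h2 (by positivity)
      _ = ((h:ℝ) + 1) * (t/r) * (1/2) ^ h := by ring
  have hgsum : HasSum (fun h : ℕ => ((h:ℝ) + 1) * (t/r) * (1/2) ^ h) (4 * (t/r)) := by
    have h1 : HasSum (fun h : ℕ => (h:ℝ) * (1/2:ℝ) ^ h) ((1/2) / (1 - 1/2)^2) :=
      hasSum_coe_mul_geometric_of_norm_lt_one (by norm_num)
    have h2 : HasSum (fun h : ℕ => (1/2:ℝ) ^ h) (1 - 1/2)⁻¹ :=
      hasSum_geometric_of_lt_one (by norm_num) (by norm_num)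
    have h3 := (h1.add h2).mul_left (t/r)
    have heq : (fun h : ℕ => ((h:ℝ)+1)*(t/r)*(1/2:ℝ)^h)
        = fun i : ℕ => t/r*((i:ℝ)*(1/2:ℝ)^i + (1/2:ℝ)^i) := by
      funext i; ring
    rw [show (4:ℝ)*(t/r) = t/r * ((1/2:ℝ)/(1-1/2)^2 + ((1:ℝ)-1/2)⁻¹) by rw [mul_comm]; norm_num]
    exact heq ▸ h3
  have hS2 : (∑' h : ℕ, (((h + m : ℕ) : ℝ) - L) * (t / 2 ^ (h + m))) ≤ 4 * (t/r) := by
    have hfs : Summable (fun h : ℕ => (((h + m : ℕ) : ℝ) - L) * (t / 2 ^ (h + m))) := by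
      apply Summable.of_nonneg_of_le _ hfle hgsum.summable
      intro h
      have h0 : (0:ℝ) ≤ ((h + m : ℕ) : ℝ) - L := by
        push_cast
        have : (0:ℝ) ≤ (h:ℝ) := Nat.cast_nonneg h
        linarith
      positivity
    calc (∑' h : ℕ, (((h + m : ℕ) : ℝ) - L) * (t / 2 ^ (h + m)))
        ≤ ∑' h : ℕ, ((h:ℝ) + 1) * (t/r) * (1/2) ^ h := Summable.tsum_le_tsum hfle hfs hgsum.summable
      _ = 4 * (t/r) := hgsum.tsum_eq
  -- combine
  have hfirst : (∑ h ∈ Finset.range (⌊L⌋₊ + 1), (2 * t / r) * (b / 2) ^ h)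
      ≤ 6 * d * (t/r) := by
    rw [← Finset.mul_sum]
    have h2tr : (0:ℝ) ≤ 2 * t / r := by positivity
    calc (2 * t / r) * ∑ h ∈ Finset.range (⌊L⌋₊ + 1), (b/2) ^ h
        ≤ (2 * t / r) * (3 * d) := mul_le_mul_of_nonneg_left hS1 h2tr
      _ = 6 * d * (t/r) := by ring
  have htr : (0:ℝ) ≤ t/r := by positivity
  have : 4 * (t/r) ≤ 4 * d * (t/r) := by
    have h4d : (4:ℝ) ≤ 4 * d := by linarith
    exact mul_le_mul_of_nonneg_right h4d htr
  calc (∑ h ∈ Finset.range (⌊L⌋₊ + 1), (2 * t / r) * (b / 2) ^ h) +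
        (∑' h : ℕ, (((h + m : ℕ) : ℝ) - L) * (t / 2 ^ (h + m)))
      ≤ 6 * d * (t/r) + 4 * (t/r) := add_le_add hfirst hS2
    _ ≤ 6 * d * (t/r) + 4 * d * (t/r) := by linarith
    _ = 10 * d * t / r := by field_simp; ring
end

section
/- Let ℓ ≤ −1 and d ≥ 2 be integers, let a_z ∈ [1, 2), and set α = a_z·2^ℓ/√(d−1) and Δ = 2^{2^ℓ} − 1. Let a = (0, 0, …, 0) ∈ ℝ^{d−1} and b = (2α, α, …, α) ∈ ℝ^{d−1} (first coordinate 2α, the remaining d−2 coordinates α). Then the Euclidean distance ‖a − b‖ = α·√(d+2) is strictly less than 4Δ/ln 2. -/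
/-- The key distance estimate of the facet-extension lemma: the Euclidean distance between
the opposite top corners `a = 0` and `b = (2α, α, …, α)` equals `α·√(d+2)` and is strictly
less than `4Δ/ln 2`, where `α = a_z·2^ℓ/√(d−1)` and `Δ = 2^{2^ℓ} − 1`. -/
theorem stmt_16 (ℓ : ℤ) (hℓ : ℓ ≤ -1) (d : ℕ) (hd : 2 ≤ d)
    (az : ℝ) (haz1 : 1 ≤ az) (haz2 : az < 2)
    (α Δ : ℝ) (hα : α = az * (2 : ℝ) ^ ℓ / Real.sqrt (d - 1))
    (hΔ : Δ = (2 : ℝ) ^ ((2 : ℝ) ^ ℓ) - 1)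
    (a b : EuclideanSpace ℝ (Fin (d - 1))) (ha : a = 0)
    (hb : b = fun i : Fin (d - 1) =>
      if i = (⟨0, by omega⟩ : Fin (d - 1)) then 2 * α else α) :
    ‖a - b‖ = α * Real.sqrt (d + 2) ∧
      α * Real.sqrt (d + 2) < 4 * Δ / Real.log 2 := by
  have hdR : (2:ℝ) ≤ (d:ℝ) := by exact_mod_cast hd
  have hsq : 0 < Real.sqrt ((d:ℝ) - 1) := Real.sqrt_pos.mpr (by linarith)
  have ht : (0:ℝ) < (2:ℝ) ^ ℓ := by positivity
  have hα0 : 0 ≤ α := by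
    rw [hα]; positivity
  have hnorm : ‖a - b‖ = α * Real.sqrt (d + 2) := by
    subst ha
    rw [zero_sub, norm_neg, EuclideanSpace.norm_eq, hb]
    set i0 : Fin (d - 1) := (⟨0, by omega⟩ : Fin (d - 1)) with hi0
    have hsum : ∑ i : Fin (d - 1),
        ‖(if i = i0 then 2 * α else α)‖ ^ 2 = ((d:ℝ) + 2) * α ^ 2 := by
      rw [← Finset.add_sum_erase _ _ (Finset.mem_univ i0)]
      simp only [if_pos rfl]
      have h2 : ∑ i ∈ Finset.univ.erase i0,
          ‖(if i = i0 then 2 * α else α)‖ ^ 2 = ((d:ℝ) - 2) * α ^ 2 := by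
        rw [Finset.sum_congr rfl (fun i hi => by
          rw [if_neg (Finset.ne_of_mem_erase hi)])]
        rw [Finset.sum_const, Finset.card_erase_of_mem (Finset.mem_univ i0),
          Finset.card_univ, Fintype.card_fin]
        have : ((d - 1 - 1 : ℕ) : ℝ) = (d:ℝ) - 2 := by
          have : d - 1 - 1 = d - 2 := by omega
          rw [this]; push_cast [Nat.cast_sub hd]; ring
        rw [nsmul_eq_mul, this]
        simp [Real.norm_eq_abs, sq_abs]
      rw [h2]
      simp only [if_true, Real.norm_eq_abs, sq_abs]
      ring
    rw [hsum]
    rw [show ((d:ℝ) + 2) * α ^ 2 = α ^ 2 * ((d:ℝ) + 2) by ring,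
      Real.sqrt_mul (sq_nonneg α), Real.sqrt_sq hα0]
  refine ⟨hnorm, ?_⟩
  have hlog2 : 0 < Real.log 2 := Real.log_pos (by norm_num)
  have hΔge : Real.log 2 * (2:ℝ) ^ ℓ ≤ Δ := by
    rw [hΔ, Real.rpow_def_of_pos (by norm_num : (0:ℝ) < 2)]
    have := Real.add_one_le_exp (Real.log 2 * (2:ℝ) ^ ℓ)
    linarith
  -- √(d+2) ≤ 2 √(d−1)
  have hsqle : Real.sqrt ((d:ℝ) + 2) ≤ 2 * Real.sqrt ((d:ℝ) - 1) := by
    have h1 : Real.sqrt ((d:ℝ) + 2) ≤ Real.sqrt (4 * ((d:ℝ) - 1)) :=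
      Real.sqrt_le_sqrt (by linarith)
    have h2 : Real.sqrt (4 * ((d:ℝ) - 1)) = 2 * Real.sqrt ((d:ℝ) - 1) := by
      rw [Real.sqrt_mul (by norm_num), show (4:ℝ) = 2^2 by norm_num,
        Real.sqrt_sq (by norm_num)]
    linarith
  have key : α * Real.sqrt ((d:ℝ) + 2) < 4 * (2:ℝ) ^ ℓ := by
    rw [hα]
    have : az * (2:ℝ) ^ ℓ / Real.sqrt ((d:ℝ) - 1) * Real.sqrt ((d:ℝ) + 2)
        ≤ az * (2:ℝ) ^ ℓ / Real.sqrt ((d:ℝ) - 1) * (2 * Real.sqrt ((d:ℝ) - 1)) := by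
      apply mul_le_mul_of_nonneg_left hsqle
      positivity
    have heq : az * (2:ℝ) ^ ℓ / Real.sqrt ((d:ℝ) - 1) * (2 * Real.sqrt ((d:ℝ) - 1))
        = 2 * az * (2:ℝ) ^ ℓ := by
      field_simp
    have : az * (2:ℝ) ^ ℓ / Real.sqrt ((d:ℝ) - 1) * Real.sqrt ((d:ℝ) + 2)
        ≤ 2 * az * (2:ℝ) ^ ℓ := by linarith [heq ▸ this]
    nlinarith
  have hfin : (4:ℝ) * (2:ℝ) ^ ℓ ≤ 4 * Δ / Real.log 2 := by
    rw [le_div_iff₀ hlog2]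
    nlinarith
  linarith
end

section
/- Let o ∈ ℂ, R > 0, and let θ₁ ≤ θ ≤ θ₂ be real numbers with θ₂ − θ₁ ≤ π. Set a = o + R·exp(i·θ₁), b = o + R·exp(i·θ₂), and p = o + R·exp(i·θ). Then the Euclidean distance from p to the closed segment [a, b] is at most |a − b|/2. In other words, a circular arc no longer than a semicircle deviates from its chord by at most half the chord length. -/
private lemma cos_double_sin (x : ℝ) : Real.cos (2 * x) = 1 - 2 * Real.sin x ^ 2 := by
  rw [Real.cos_two_mul]
  nlinarith [Real.sin_sq_add_cos_sq x]

private lemma key_trig (α β : ℝ) (hα : 0 ≤ α) (hβ : 0 ≤ β) (hs : α + β ≤ Real.pi) :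
    1 + Real.cos (α + β) ≤ Real.cos α + Real.cos β := by
  have hsu : 0 ≤ Real.sin (α / 2) :=
    Real.sin_nonneg_of_nonneg_of_le_pi (by linarith) (by nlinarith [Real.pi_pos])
  have hsv : 0 ≤ Real.sin (β / 2) :=
    Real.sin_nonneg_of_nonneg_of_le_pi (by linarith) (by nlinarith [Real.pi_pos])
  have hc : 0 ≤ Real.cos (α / 2 + β / 2) := by
    apply Real.cos_nonneg_of_mem_Icc
    constructor <;> [linarith; linarith]
  have e1 := cos_double_sin (α / 2); rw [show 2 * (α / 2) = α by ring] at e1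
  have e2 := cos_double_sin (β / 2); rw [show 2 * (β / 2) = β by ring] at e2
  have e3 := cos_double_sin (α / 2 + β / 2)
  rw [show 2 * (α / 2 + β / 2) = α + β by ring] at e3
  rw [e1, e2, e3, Real.sin_add]
  have hid : (Real.sin (α/2) * Real.cos (β/2) + Real.cos (α/2) * Real.sin (β/2)) ^ 2
      - Real.sin (α/2) ^ 2 - Real.sin (β/2) ^ 2
      = 2 * Real.sin (α/2) * Real.sin (β/2)
        * (Real.cos (α/2) * Real.cos (β/2) - Real.sin (α/2) * Real.sin (β/2)) := by
    linear_combination Real.sin (α/2) ^ 2 * (Real.sin_sq_add_cos_sq (β/2))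
      + Real.sin (β/2) ^ 2 * (Real.sin_sq_add_cos_sq (α/2))
  have hca := Real.cos_add (α/2) (β/2)
  rw [← hca] at hid
  nlinarith [hid, mul_nonneg (mul_nonneg hsu hsv) hc]

open Complex in
/-- A circular arc no longer than a semicircle deviates from its chord by at most half the
chord length: any point `p` on the arc from `a` to `b` is within distance `|a − b|/2` of the
segment `[a, b]`. -/
theorem stmt_18 (o : ℂ) (R : ℝ) (hR : 0 < R) (θ₁ θ θ₂ : ℝ)
    (h1 : θ₁ ≤ θ) (h2 : θ ≤ θ₂) (h3 : θ₂ - θ₁ ≤ Real.pi)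
    (a b p : ℂ) (ha : a = o + R * Complex.exp (θ₁ * Complex.I))
    (hb : b = o + R * Complex.exp (θ₂ * Complex.I))
    (hp : p = o + R * Complex.exp (θ * Complex.I)) :
    Metric.infDist p (segment ℝ a b) ≤ ‖a - b‖ / 2 := by
  have hm : (a + b) / 2 ∈ segment ℝ a b := by
    refine ⟨1/2, 1/2, by norm_num, by norm_num, by norm_num, ?_⟩
    rw [Complex.real_smul, Complex.real_smul]
    push_cast
    ring
  refine le_trans (Metric.infDist_le_dist_of_mem hm) ?_
  rw [Complex.dist_eq]
  have e1 : p - (a + b) / 2 =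
      (R : ℂ) * ((2 * Complex.exp (θ * Complex.I) - Complex.exp (θ₁ * Complex.I)
        - Complex.exp (θ₂ * Complex.I)) / 2) := by
    rw [ha, hb, hp]; ring
  have e2 : a - b = (R : ℂ) * (Complex.exp (θ₁ * Complex.I) - Complex.exp (θ₂ * Complex.I)) := by
    rw [ha, hb]; ring
  have key := key_trig (θ - θ₁) (θ₂ - θ) (by linarith) (by linarith) (by linarith)
  rw [show θ - θ₁ + (θ₂ - θ) = θ₂ - θ₁ by ring] at key
  have hns : Complex.normSq (2 * Complex.exp (θ * Complex.I) - Complex.exp (θ₁ * Complex.I)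
      - Complex.exp (θ₂ * Complex.I)) ≤
      Complex.normSq (Complex.exp (θ₁ * Complex.I) - Complex.exp (θ₂ * Complex.I)) := by
    simp only [Complex.normSq_apply, Complex.sub_re, Complex.sub_im, Complex.mul_re,
      Complex.mul_im, Complex.ofReal_re, Complex.ofReal_im, Complex.exp_ofReal_mul_I_re,
      Complex.exp_ofReal_mul_I_im, Complex.re_ofNat, Complex.im_ofNat]
    nlinarith [Real.cos_sub θ θ₁, Real.cos_sub θ₂ θ, Real.cos_sub θ₂ θ₁,
      Real.sin_sq_add_cos_sq θ, Real.sin_sq_add_cos_sq θ₁, Real.sin_sq_add_cos_sq θ₂, key]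
  have habs : ‖(2 * Complex.exp (θ * Complex.I) - Complex.exp (θ₁ * Complex.I)
      - Complex.exp (θ₂ * Complex.I))‖ ≤
      ‖(Complex.exp (θ₁ * Complex.I) - Complex.exp (θ₂ * Complex.I))‖ := by
    rw [Complex.norm_def, Complex.norm_def]
    exact Real.sqrt_le_sqrt hns
  rw [e1, e2, norm_mul, norm_mul, norm_div, Complex.norm_real, Real.norm_eq_abs, abs_of_pos hR]
  have h2' : ‖(2 : ℂ)‖ = 2 := by norm_num
  rw [h2']
  linarith [mul_le_mul_of_nonneg_left habs hR.le]
end
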